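/- End-to-end decryption correctness: let q be prime, G₁, G_T groups of exponent q, g ∈ G₁, ê bilinear. Let K ∈ ZMod q, σ, δ, r ∈ ZMod q, and let η₁, …, ηₙ ∈ ZMod q be nonzero with the elements ê(g,g)^{δ·r/ηᵢ} ∈ G_T. Assume G_T-elements can be encoded injectively into ZMod q via a map φ, and define xᵢ = φ(ê(g,g)^{δ·r/ηᵢ}) and P(X) = K + ∏ᵢ (X − xᵢ). Then for any consumer holding nonzero u ∈ ZMod q and key TKᵢ = g^{(δ·u)/ηᵢ² + (σ·h)/ηᵢ} (for some h ∈ ZMod q), the derived value x'ᵢ = φ((ê(TKᵢ, g^{ηᵢ·r}) / (ê(g,g)^{σ·r})^h)^{1/u}) satisfies P(x'ᵢ) = K. -/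
import Mathlib


/-- Exponentiation of a group element by an element of `ZMod q`. -/
def gp {G : Type*} [Monoid G] {q : ℕ} (g : G) (a : ZMod q) : G := g ^ a.val

lemma pow_mod {G : Type*} [Monoid G] {q : ℕ} {g : G} (hg : g ^ q = 1) (m : ℕ) :
    g ^ m = g ^ (m % q) := by
  conv_lhs => rw [← Nat.mod_add_div m q, pow_add, pow_mul, hg, one_pow, mul_one]

lemma gp_add {G : Type*} [Monoid G] {q : ℕ} [NeZero q] {g : G} (hg : g ^ q = 1)
    (a b : ZMod q) : gp g (a + b) = gp g a * gp g b := by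
  rw [gp, gp, gp, ← pow_add, ZMod.val_add, ← pow_mod hg]

lemma gp_gp {G : Type*} [Monoid G] {q : ℕ} [NeZero q] {g : G} (hg : g ^ q = 1)
    (a b : ZMod q) : gp (gp g a) b = gp g (a * b) := by
  rw [gp, gp, gp, ← pow_mul, ZMod.val_mul, ← pow_mod hg]

open Polynomial in
theorem stmt10 {q : ℕ} [Fact q.Prime] {G₁ GT : Type*} [CommGroup G₁] [CommGroup GT]
    (hord1 : ∀ x : G₁, x ^ q = 1) (hordT : ∀ x : GT, x ^ q = 1)
    (g : G₁) (e : G₁ → G₁ → GT)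
    (hbil : ∀ a b : ZMod q, e (gp g a) (gp g b) = gp (e g g) (a * b))
    (φ : GT → ZMod q) (n : ℕ) (K σ δ r u h : ZMod q)
    (η : Fin n → ZMod q) (hη : ∀ i, η i ≠ 0) (hu : u ≠ 0)
    (x : Fin n → ZMod q) (hx : ∀ i, x i = φ (gp (e g g) (δ * r / η i)))
    (P : Polynomial (ZMod q)) (hP : P = C K + ∏ i, (X - C (x i)))
    (TK : Fin n → G₁) (hTK : ∀ i, TK i = gp g (δ * u / (η i) ^ 2 + σ * h / η i)) :
    ∀ i, P.eval
        (φ (gp (e (TK i) (gp g (η i * r)) / gp (gp (e g g) (σ * r)) h) (1 / u))) = K := by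
  intro i
  have hqT := hordT (e g g)
  have key : gp (e (TK i) (gp g (η i * r)) / gp (gp (e g g) (σ * r)) h) (1 / u)
      = gp (e g g) (δ * r / η i) := by
    have h1 : e (TK i) (gp g (η i * r)) = gp (e g g) (δ * u * r / η i + σ * r * h) := by
      rw [hTK, hbil]
      congr 1
      field_simp [hη i]
    have h2 : gp (gp (e g g) (σ * r)) h = gp (e g g) (σ * r * h) := gp_gp hqT _ _
    rw [h1, h2, gp_add hqT, mul_div_cancel_right, gp_gp hqT]
    congr 1
    field_simp [hη i]
  rw [key, ← hx, hP]
  simp only [eval_add, eval_C, eval_prod, eval_sub, eval_X]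
  rw [Finset.prod_eq_zero (Finset.mem_univ i) (by simp), add_zero]
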